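/- Let P(λ) = ∑_{k=0}^d λ^k P_k be a regular n×n matrix polynomial over a field F with even degree d = 2t (t ≥ 2) and invertible trailing coefficient P_0. Let λB̃+Ã be a pencil of size (t+1)n×(t+1)n whose blocks M̃_{11}(λ) = −P_0, M̃_{12}(λ), M̃_{21}(λ), M̃_{22}(λ) satisfy M̃_{12}(λ)(Λ_{t−1}(λ)⊗I_n) = λ^t P_0, (Λ_{t−1}(λ)^T⊗I_n)M̃_{21}(λ) = λ^t P_0, and (Λ_{t−1}(λ)^T⊗I_n)M̃_{22}(λ)(Λ_{t−1}(λ)⊗I_n) = rev_d P(λ) − λ^d P_0, let L̃(λ) be the associated modified block Kronecker pencil with parameter σ ∈ {1,−1}, and set L(λ) := rev_1 L̃(λ). Then: (a) if λ0 ∈ F with λ0 ≠ 0 and z ∈ F^{2tn} with z ≠ 0 satisfy L(λ0)z = 0, then the (t+1)-th n×n block x of z satisfies x ≠ 0 and P(λ0)x = 0; (b) if z ∈ F^{2tn} with z ≠ 0 satisfies (rev_1 L)(0)·z = 0 (equivalently L̃(0)z = 0), then the (t+1)-th n×n block x of z satisfies x ≠ 0 and P_d x = 0, i.e., x is a right eigenvector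 of P for the eigenvalue ∞. -/

import Mathlib

open Polynomial Matrix
open scoped Kronecker

noncomputable section

/-- Entrywise inclusion of a constant matrix into polynomial matrices. -/
def matC {F : Type} [Field F] {m l : Type*} (M : Matrix m l F) : Matrix m l (Polynomial F) :=
  M.map fun a => (C a : Polynomial F)

/-- The pencil `λ ↦ A + λ B`, represented as a matrix over `F[λ]`. -/
def pencil {F : Type} [Field F] {m l : Type*} (A B : Matrix m l F) :
    Matrix m l (Polynomial F) :=
  matC A + (X : Polynomial F) • matC B

/-- Grade-`g` reversal `rev_g`, applied entrywise. -/
def revMat {F : Type} [Field F] {m l : Type*} (g : ℕ) (M : Matrix m l (Polynomial F)) :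
    Matrix m l (Polynomial F) :=
  M.map fun q => q.reflect g

/-- Entrywise evaluation of a polynomial matrix at a point. -/
def evalMat {F : Type} [Field F] {m l : Type*} (a : F) (M : Matrix m l (Polynomial F)) :
    Matrix m l F :=
  M.map fun q => q.eval a

/-- The matrix polynomial `P(λ) = ∑_{k=0}^d λ^k P_k` built from its coefficients. -/
def polyOfCoeffs {F : Type} [Field F] {n : ℕ} (d : ℕ) (Pc : ℕ → Matrix (Fin n) (Fin n) F) :
    Matrix (Fin n) (Fin n) (Polynomial F) :=
  ∑ k ∈ Finset.range (d + 1), (X : Polynomial F) ^ k • matC (Pc k)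

/-- The `(i,j)` block of a block-partitioned matrix. -/
def blk {α p q n m : Type*} (A : Matrix (p × n) (q × m) α) (i : p) (j : q) :
    Matrix n m α :=
  Matrix.of fun r c => A (i, r) (j, c)

/-- `Λ_s(λ) ⊗ I_n`, an `(s+1)n × n` polynomial matrix whose `i`-th block is `λ^{s-i} I_n`. -/
def Lam (F : Type) [Field F] (s n : ℕ) :
    Matrix (Fin (s+1) × Fin n) (Fin n) (Polynomial F) :=
  Matrix.of fun p c => if p.2 = c then (X : Polynomial F) ^ (s - (p.1 : ℕ)) else 0

/-- The pencil `L_s(λ) ∈ F[λ]^{s×(s+1)}` with `-1` on the diagonal and `λ` on the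
superdiagonal. -/
def Lpen (F : Type) [Field F] (s : ℕ) : Matrix (Fin s) (Fin (s+1)) (Polynomial F) :=
  Matrix.of fun i j =>
    if (j : ℕ) = (i : ℕ) then -1 else if (j : ℕ) = (i : ℕ) + 1 then X else 0

/-- The block Kronecker pencil `[[λB+A, L_s(λ)ᵀ⊗I_n],[σ L_s(λ)⊗I_n, 0]]` associated with a
pencil `M = λB+A` of size `(s+1)n × (s+1)n`. -/
def blockKron (F : Type) [Field F] (s n : ℕ) (σ : F)
    (M : Matrix (Fin (s+1) × Fin n) (Fin (s+1) × Fin n) (Polynomial F)) :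
    Matrix ((Fin (s+1) × Fin n) ⊕ (Fin s × Fin n)) ((Fin (s+1) × Fin n) ⊕ (Fin s × Fin n))
      (Polynomial F) :=
  Matrix.fromBlocks M (Lpen F s ⊗ₖ (1 : Matrix (Fin n) (Fin n) (Polynomial F)))ᵀ
    (σ • (Lpen F s ⊗ₖ (1 : Matrix (Fin n) (Fin n) (Polynomial F)))) 0

/-- `L` is a linearization of `P`: there are unimodular `U`, `V` with
`U L V = diag(I_m, P)` (up to the fixed identification of index sets). -/
def IsLinearization {F : Type} [Field F] (m : ℕ) {ι ρ : Type*} [Fintype ι] [DecidableEq ι]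
    [Fintype ρ] [DecidableEq ρ] (L : Matrix ι ι (Polynomial F))
    (P : Matrix ρ ρ (Polynomial F)) : Prop :=
  ∃ (e : (Fin m ⊕ ρ) ≃ ι) (U V : Matrix ι ι (Polynomial F)),
    IsUnit U.det ∧ IsUnit V.det ∧
      U * L * V =
        (Matrix.fromBlocks (1 : Matrix (Fin m) (Fin m) (Polynomial F)) 0 0 P).submatrix
          e.symm e.symm

/-- The block conditions `∑_{i+j=d+2-k} B_{ij} + ∑_{i+j=d+1-k} A_{ij} = P_k` for
`k = 0,…,d` (blocks are indexed here `0`-based, so `i+j` `1`-based is `i+j+2` `0`-based). -/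
def blockConds {F : Type} [Field F] {s n : ℕ} (d : ℕ) (Pc : ℕ → Matrix (Fin n) (Fin n) F)
    (A B : Matrix (Fin (s+1) × Fin n) (Fin (s+1) × Fin n) F) : Prop :=
  ∀ k, k ≤ d →
    (∑ p ∈ Finset.univ.filter
        (fun p : Fin (s+1) × Fin (s+1) => (p.1 : ℕ) + (p.2 : ℕ) + 2 + k = d + 2),
        blk B p.1 p.2) +
      (∑ p ∈ Finset.univ.filter
        (fun p : Fin (s+1) × Fin (s+1) => (p.1 : ℕ) + (p.2 : ℕ) + 2 + k = d + 1),
        blk A p.1 p.2) = Pc k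

/-- `L̂_t(λ) ⊗ I_n` (with `t = u+1`): first block column zero, remaining block columns
`L_{t-1}(λ) ⊗ I_n`; the column index is split as `Fin n ⊕ (Fin t × Fin n)`. -/
def LhatB (F : Type) [Field F] (u n : ℕ) :
    Matrix (Fin u × Fin n) (Fin n ⊕ Fin (u+1) × Fin n) (Polynomial F) :=
  Matrix.of fun p q =>
    match q with
    | Sum.inl _ => 0
    | Sum.inr c => (Lpen F u ⊗ₖ (1 : Matrix (Fin n) (Fin n) (Polynomial F))) p c

/-- The modified block Kronecker pencil `[[λB+A, L̂_t(λ)ᵀ⊗I_n],[σ L̂_t(λ)⊗I_n, 0]]`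
(with `t = u+1`). -/
def modBK (F : Type) [Field F] (u n : ℕ) (σ : F)
    (M : Matrix (Fin n ⊕ Fin (u+1) × Fin n) (Fin n ⊕ Fin (u+1) × Fin n) (Polynomial F)) :
    Matrix ((Fin n ⊕ Fin (u+1) × Fin n) ⊕ Fin u × Fin n)
      ((Fin n ⊕ Fin (u+1) × Fin n) ⊕ Fin u × Fin n) (Polynomial F) :=
  Matrix.fromBlocks M (LhatB F u n)ᵀ (σ • LhatB F u n) 0

/-- `Λ̂_t(λ) ⊗ I_n` (with `t = u+1`): the `(t+1)n × 2n` polynomial matrix whose transpose has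
block rows `(I_n, 0, …, 0)` and `(0, λ^{t-1}I_n, …, λ I_n, I_n)`. -/
def LamHatB (F : Type) [Field F] (u n : ℕ) :
    Matrix (Fin n ⊕ Fin (u+1) × Fin n) (Fin 2 × Fin n) (Polynomial F) :=
  Matrix.of fun q c =>
    match q with
    | Sum.inl r => if c.1 = 0 ∧ c.2 = r then 1 else 0
    | Sum.inr p => if c.1 = 1 ∧ c.2 = p.2 then (X : Polynomial F) ^ (u - (p.1 : ℕ)) else 0

/-- `Λ̃_t(λ) ⊗ I_n` (with `t = u+1`): the `(t+1)n × 2n` polynomial matrix whose transpose has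
block rows `(I_n, 0, …, 0)` and `(0, I_n, λ I_n, …, λ^{t-1} I_n)`. -/
def LamTildeB (F : Type) [Field F] (u n : ℕ) :
    Matrix (Fin n ⊕ Fin (u+1) × Fin n) (Fin 2 × Fin n) (Polynomial F) :=
  Matrix.of fun q c =>
    match q with
    | Sum.inl r => if c.1 = 0 ∧ c.2 = r then 1 else 0
    | Sum.inr p => if c.1 = 1 ∧ c.2 = p.2 then (X : Polynomial F) ^ (p.1 : ℕ) else 0

/-- A `2n × 2n` matrix assembled from four `n × n` blocks, indexed by `Fin 2 × Fin n`. -/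
def twoBlock {α : Type*} {n : ℕ} (W₁₁ W₁₂ W₂₁ W₂₂ : Matrix (Fin n) (Fin n) α) :
    Matrix (Fin 2 × Fin n) (Fin 2 × Fin n) α :=
  Matrix.of fun p q =>
    if p.1 = 0 then (if q.1 = 0 then W₁₁ p.2 q.2 else W₁₂ p.2 q.2)
    else (if q.1 = 0 then W₂₁ p.2 q.2 else W₂₂ p.2 q.2)

/-- `Λ_t(λ) ⊗ I_n` (with `t = u+1`), over the split row index `Fin n ⊕ (Fin t × Fin n)`:
block entries `λ^t I_n, λ^{t-1} I_n, …, λ I_n, I_n`. -/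
def LamFullB (F : Type) [Field F] (u n : ℕ) :
    Matrix (Fin n ⊕ Fin (u+1) × Fin n) (Fin n) (Polynomial F) :=
  Matrix.of fun q c =>
    match q with
    | Sum.inl r => if r = c then (X : Polynomial F) ^ (u + 1) else 0
    | Sum.inr p => if p.2 = c then (X : Polynomial F) ^ (u - (p.1 : ℕ)) else 0

/-- `N̂_t(λ) = Ĥ_t(λ) ⊗ I_n` (with `t = u+1`): `Ĥ_t ∈ F[λ]^{(t-1)×(t+1)}` has `(i,j)` entry
`λ^{i+1-j}` if `2 ≤ j ≤ i+1` and `0` otherwise. -/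
def NhatB (F : Type) [Field F] (u n : ℕ) :
    Matrix (Fin u × Fin n) (Fin n ⊕ Fin (u+1) × Fin n) (Polynomial F) :=
  Matrix.of fun p q =>
    match q with
    | Sum.inl _ => 0
    | Sum.inr c =>
        if (c.1 : ℕ) ≤ (p.1 : ℕ) ∧ p.2 = c.2 then
          (X : Polynomial F) ^ ((p.1 : ℕ) - (c.1 : ℕ)) else 0

end

/-!
Split a kernel vector `z` of the modified block Kronecker pencil at `μ` as `(a, b, v)`. The last
block rows say `(L_{t-1}(μ) ⊗ I) b = 0`, so `b = (Λ_{t-1}(μ) ⊗ I) x` with `x` the last block of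
`b`; the first block row then gives `P₀ a = μ^t P₀ x`, hence `a = μ^t x`. Multiplying the middle
block rows by `Λ_{t-1}(μ)ᵀ ⊗ I` kills the `v`-term (as `L_{t-1} Λ_{t-1} = 0`) and leaves
`rev_d P(μ) x = 0`. If `x = 0`, then `a = b = 0` and `(L_{t-1}(μ) ⊗ I)ᵀ v = 0`, so `v = 0`: the
first `t-1` rows of `L_{t-1}(μ)ᵀ` form a bidiagonal matrix with `-1` on the diagonal.
Part (a) takes `μ = 1/λ₀`, using `rev_1 L̃(λ₀) = λ₀ L̃(1/λ₀)` and `rev_d P(1/λ₀) = λ₀^{-d} P(λ₀)`;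
part (b) takes `μ = 0`, using `rev_1 rev_1 L̃ = L̃` and `rev_d P(0) = P_d`.
-/

section EvalRev

variable {F : Type} [Field F] {m l k : Type*}

lemma evalMat_eq_map (a : F) (M : Matrix m l F[X]) : evalMat a M = M.map (evalRingHom a) :=
  rfl

lemma evalMat_mul [Fintype l] (a : F) (M : Matrix m l F[X]) (N : Matrix l k F[X]) :
    evalMat a (M * N) = evalMat a M * evalMat a N := by
  simp only [evalMat_eq_map, Matrix.map_mul]

lemma evalMat_sub (a : F) (M N : Matrix m l F[X]) :
    evalMat a (M - N) = evalMat a M - evalMat a N := by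
  ext i j
  simp [evalMat]

lemma evalMat_transpose (a : F) (M : Matrix m l F[X]) : evalMat a Mᵀ = (evalMat a M)ᵀ :=
  rfl

lemma evalMat_neg (a : F) (M : Matrix m l F[X]) : evalMat a (-M) = -evalMat a M := by
  ext i j
  simp [evalMat]

lemma evalMat_matC (a : F) (M : Matrix m l F) : evalMat a (matC M) = M := by
  ext i j
  simp [evalMat, matC]

lemma evalMat_X_pow_smul_matC (a : F) (k : ℕ) (M : Matrix m l F) :
    evalMat a ((X : F[X]) ^ k • matC M) = a ^ k • M := by
  ext i j
  simp only [evalMat, matC, Matrix.map_apply, Matrix.smul_apply, smul_eq_mul, eval_mul,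
    eval_pow, eval_X, eval_C]

lemma eval_reflect_of_natDegree_le {N : ℕ} {q : F[X]} (hq : q.natDegree ≤ N) {y : F}
    (hy : y ≠ 0) : (q.reflect N).eval y = y ^ N * q.eval y⁻¹ := by
  have : Invertible y⁻¹ := invertibleOfNonzero (inv_ne_zero hy)
  have h := eval₂_reflect_mul_pow (RingHom.id F) y⁻¹ N q hq
  rw [invOf_eq_inv, inv_inv, ← eval, ← eval] at h
  rw [← h, inv_pow, mul_left_comm, mul_inv_cancel₀ (pow_ne_zero N hy), mul_one]

lemma evalMat_revMat_of_natDegree_le {g : ℕ} {M : Matrix m l F[X]}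
    (hM : ∀ i j, (M i j).natDegree ≤ g) {y : F} (hy : y ≠ 0) :
    evalMat y (revMat g M) = y ^ g • evalMat y⁻¹ M := by
  ext i j
  exact eval_reflect_of_natDegree_le (hM i j) hy

lemma revMat_revMat (g : ℕ) (M : Matrix m l F[X]) : revMat g (revMat g M) = M := by
  ext i j
  simp [revMat]

lemma evalMat_zero_revMat (g : ℕ) (M : Matrix m l F[X]) :
    evalMat 0 (revMat g M) = M.map fun q => q.coeff g := by
  ext i j
  simp [evalMat, revMat, ← coeff_zero_eq_eval_zero, coeff_reflect]

end EvalRev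

section PolyOfCoeffs

variable {F : Type} [Field F] {n : ℕ}

lemma coeff_polyOfCoeffs_apply (d : ℕ) (Pc : ℕ → Matrix (Fin n) (Fin n) F) (i j : Fin n)
    (k : ℕ) : (polyOfCoeffs d Pc i j).coeff k = if k ≤ d then Pc k i j else 0 := by
  simp [polyOfCoeffs, matC, Matrix.sum_apply]

lemma natDegree_polyOfCoeffs_apply_le (d : ℕ) (Pc : ℕ → Matrix (Fin n) (Fin n) F)
    (i j : Fin n) : (polyOfCoeffs d Pc i j).natDegree ≤ d := by
  refine natDegree_le_iff_coeff_eq_zero.mpr fun k hk => ?_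
  rw [coeff_polyOfCoeffs_apply, if_neg (not_le.mpr hk)]

lemma evalMat_zero_revMat_polyOfCoeffs (d : ℕ) (Pc : ℕ → Matrix (Fin n) (Fin n) F) :
    evalMat 0 (revMat d (polyOfCoeffs d Pc)) = Pc d := by
  ext i j
  simp [evalMat_zero_revMat, coeff_polyOfCoeffs_apply]

lemma evalMat_revMat_polyOfCoeffs (d : ℕ) (Pc : ℕ → Matrix (Fin n) (Fin n) F) {y : F}
    (hy : y ≠ 0) :
    evalMat y⁻¹ (revMat d (polyOfCoeffs d Pc)) = y⁻¹ ^ d • evalMat y (polyOfCoeffs d Pc) := by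
  rw [evalMat_revMat_of_natDegree_le (natDegree_polyOfCoeffs_apply_le d Pc) (inv_ne_zero hy),
    inv_inv]

end PolyOfCoeffs

section Degree

variable {F : Type} [Field F]

lemma natDegree_pencil_apply_le {m l : Type*} (A B : Matrix m l F) (i : m) (j : l) :
    (pencil A B i j).natDegree ≤ 1 := by
  have h : pencil A B i j = C (B i j) * X + C (A i j) := by
    simp only [pencil, matC, Matrix.add_apply, Matrix.map_apply, Matrix.smul_apply, smul_eq_mul]
    ring
  rw [h]
  exact natDegree_linear_le

lemma natDegree_Lpen_apply_le (s : ℕ) (i : Fin s) (j : Fin (s+1)) :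
    (Lpen F s i j).natDegree ≤ 1 := by
  rw [Lpen, Matrix.of_apply]
  split_ifs <;> simp

lemma natDegree_LhatB_apply_le (u n : ℕ) (p : Fin u × Fin n) (q : Fin n ⊕ Fin (u+1) × Fin n) :
    (LhatB F u n p q).natDegree ≤ 1 := by
  rcases q with _ | c
  · simp [LhatB]
  · simp only [LhatB, Matrix.of_apply, Matrix.kroneckerMap_apply, Matrix.one_apply]
    split_ifs
    · simpa using natDegree_Lpen_apply_le u p.1 c.1
    · simp

lemma natDegree_modBK_apply_le (u n : ℕ) (σ : F)
    {M : Matrix (Fin n ⊕ Fin (u+1) × Fin n) (Fin n ⊕ Fin (u+1) × Fin n) F[X]}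
    (hM : ∀ i j, (M i j).natDegree ≤ 1) (i j : (Fin n ⊕ Fin (u+1) × Fin n) ⊕ Fin u × Fin n) :
    (modBK F u n σ M i j).natDegree ≤ 1 := by
  rcases i with q | p <;> rcases j with q' | p'
  · exact hM q q'
  · exact natDegree_LhatB_apply_le u n p' q
  · exact (natDegree_smul_le _ _).trans (natDegree_LhatB_apply_le u n p q')
  · simp [modBK]

end Degree

lemma Matrix.kronecker_one_mulVec_apply {R a b n : Type*} [NonAssocSemiring R] [Fintype b]
    [Fintype n] [DecidableEq n] (A : Matrix a b R) (v : b × n → R) (i : a) (r : n) :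
    (A ⊗ₖ (1 : Matrix n n R) *ᵥ v) (i, r) = (A *ᵥ fun j => v (j, r)) i := by
  simp [mulVec, dotProduct, Fintype.sum_prod_type, one_apply]

section KroneckerPencil

variable {F : Type} [Field F]

lemma evalMat_kronecker_one {a b n : Type*} [DecidableEq n] (μ : F) (A : Matrix a b F[X]) :
    evalMat μ (A ⊗ₖ (1 : Matrix n n F[X])) = evalMat μ A ⊗ₖ (1 : Matrix n n F) := by
  ext p q
  simp only [evalMat, Matrix.map_apply, kroneckerMap_apply, one_apply]
  split_ifs <;> simp

lemma evalMat_Lpen_mulVec {s : ℕ} (μ : F) (f : Fin (s+1) → F) (i : Fin s) :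
    (evalMat μ (Lpen F s) *ᵥ f) i = -f i.castSucc + μ * f i.succ := by
  simp only [mulVec, dotProduct, evalMat, Lpen, Matrix.map_apply, Matrix.of_apply]
  rw [Fintype.sum_eq_add i.castSucc i.succ Fin.castSucc_lt_succ.ne]
  · simp
  · intro j hj
    have h1 : (j : ℕ) ≠ i := fun h => hj.1 (Fin.ext h)
    have h2 : (j : ℕ) ≠ i + 1 := fun h => hj.2 (Fin.ext h)
    simp [h1, h2]

lemma evalMat_Lpen_mulVec_eq_zero_iff {s : ℕ} (μ : F) {f : Fin (s+1) → F} :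
    evalMat μ (Lpen F s) *ᵥ f = 0 ↔ ∀ j : Fin (s+1), f j = μ ^ (s - j) * f (Fin.last s) := by
  constructor
  · intro h j
    induction j using Fin.reverseInduction with
    | last => simp
    | cast i ih =>
      have hi := congrFun h i
      rw [evalMat_Lpen_mulVec, ih, Pi.zero_apply] at hi
      have hexp : s - (i.castSucc : ℕ) = s - (i.succ : ℕ) + 1 := by
        simp only [Fin.val_castSucc, Fin.val_succ]; omega
      rw [hexp, pow_succ]
      linear_combination -hi
  · intro h
    funext i
    have hexp : s - (i.castSucc : ℕ) = s - (i.succ : ℕ) + 1 := by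
      simp only [Fin.val_castSucc, Fin.val_succ]; omega
    rw [evalMat_Lpen_mulVec, h, h i.succ, hexp, Pi.zero_apply]
    ring

lemma evalMat_Lpen_transpose_mulVec_eq_zero {s : ℕ} (μ : F) {w : Fin s → F}
    (h : (evalMat μ (Lpen F s))ᵀ *ᵥ w = 0) : w = 0 := by
  funext i
  induction i using WellFoundedLT.induction with
  | _ i ih =>
  have hi := congrFun h i.castSucc
  rw [mulVec_transpose, vecMul, dotProduct, Fintype.sum_eq_single i] at hi
  · simpa [evalMat, Lpen] using hi
  · intro j hj
    have h1 : (i : ℕ) ≠ j := fun h => hj (Fin.ext h).symm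
    simp only [evalMat, Lpen, Matrix.map_apply, Matrix.of_apply, Fin.val_castSucc, if_neg h1]
    split_ifs with h2
    · rw [ih j (by omega), Pi.zero_apply, zero_mul]
    · simp

lemma evalMat_Lam_mulVec_apply {s n : ℕ} (μ : F) (x : Fin n → F) (p : Fin (s+1) × Fin n) :
    (evalMat μ (Lam F s n) *ᵥ x) p = μ ^ (s - p.1) * x p.2 := by
  simp [mulVec, dotProduct, evalMat, Lam, apply_ite (eval μ)]

lemma evalMat_Lpen_kron_mulVec_eq_zero_iff {s n : ℕ} (μ : F) {b : Fin (s+1) × Fin n → F} :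
    evalMat μ (Lpen F s ⊗ₖ (1 : Matrix (Fin n) (Fin n) F[X])) *ᵥ b = 0 ↔
      b = evalMat μ (Lam F s n) *ᵥ fun r => b (Fin.last s, r) := by
  simp only [funext_iff, Prod.forall, evalMat_kronecker_one, kronecker_one_mulVec_apply,
    evalMat_Lam_mulVec_apply, Pi.zero_apply]
  rw [forall_comm]
  simp only [← funext_iff (f := evalMat μ (Lpen F s) *ᵥ _), ← Pi.zero_def,
    evalMat_Lpen_mulVec_eq_zero_iff]
  exact forall_comm

lemma evalMat_Lpen_kron_mul_Lam {s n : ℕ} (μ : F) :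
    evalMat μ (Lpen F s ⊗ₖ (1 : Matrix (Fin n) (Fin n) F[X])) * evalMat μ (Lam F s n) = 0 := by
  refine ext_iff_mulVec.mpr fun x => ?_
  rw [← mulVec_mulVec, zero_mulVec, evalMat_Lpen_kron_mulVec_eq_zero_iff]
  congr 1
  funext r
  simp [evalMat_Lam_mulVec_apply]

lemma eq_zero_of_evalMat_Lpen_kron_transpose_mulVec_eq_zero {s n : ℕ} (μ : F)
    {v : Fin s × Fin n → F}
    (h : (evalMat μ (Lpen F s ⊗ₖ (1 : Matrix (Fin n) (Fin n) F[X])))ᵀ *ᵥ v = 0) : v = 0 := by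
  rw [evalMat_kronecker_one, ← kroneckerMap_transpose, transpose_one] at h
  funext ⟨i, r⟩
  have hr : (evalMat μ (Lpen F s))ᵀ *ᵥ (fun j => v (j, r)) = 0 := by
    funext j
    rw [← kronecker_one_mulVec_apply]
    exact congrFun h (j, r)
  exact congrFun (evalMat_Lpen_transpose_mulVec_eq_zero μ hr) i

end KroneckerPencil

section ModifiedBlockKronecker

variable {F : Type} [Field F] {u n : ℕ}

lemma modBK_mulVec_eq_zero {μ σ : F} (hσ : σ ≠ 0)
    (M : Matrix (Fin n ⊕ Fin (u+1) × Fin n) (Fin n ⊕ Fin (u+1) × Fin n) F[X])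
    {a : Fin n → F} {b : Fin (u+1) × Fin n → F} {v : Fin u × Fin n → F}
    (h : evalMat μ (modBK F u n σ M) *ᵥ Sum.elim (Sum.elim a b) v = 0) :
    evalMat μ M.toBlocks₁₁ *ᵥ a + evalMat μ M.toBlocks₁₂ *ᵥ b = 0 ∧
    evalMat μ M.toBlocks₂₁ *ᵥ a + evalMat μ M.toBlocks₂₂ *ᵥ b +
        (evalMat μ (Lpen F u ⊗ₖ (1 : Matrix (Fin n) (Fin n) F[X])))ᵀ *ᵥ v = 0 ∧
    evalMat μ (Lpen F u ⊗ₖ (1 : Matrix (Fin n) (Fin n) F[X])) *ᵥ b = 0 := by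
  refine ⟨funext fun r => ?_, funext fun c => ?_, funext fun p => ?_⟩
  · simpa [mulVec, dotProduct, Fintype.sum_sum_type, modBK, LhatB, evalMat, toBlocks₁₁,
      toBlocks₁₂] using congrFun h (Sum.inl (Sum.inl r))
  · simpa [mulVec, dotProduct, Fintype.sum_sum_type, modBK, LhatB, evalMat, toBlocks₂₁,
      toBlocks₂₂, add_assoc] using congrFun h (Sum.inl (Sum.inr c))
  · simpa [mulVec, dotProduct, Fintype.sum_sum_type, modBK, LhatB, evalMat, mul_assoc,
      ← Finset.mul_sum, hσ] using congrFun h (Sum.inr p)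

theorem mulVec_lastBlock_eq_zero_of_modBK_mulVec_eq_zero {σ : F} (hσ : σ ≠ 0)
    {P₀ : Matrix (Fin n) (Fin n) F} (hP₀ : IsUnit P₀.det) {R : Matrix (Fin n) (Fin n) F[X]}
    {M : Matrix (Fin n ⊕ Fin (u+1) × Fin n) (Fin n ⊕ Fin (u+1) × Fin n) F[X]}
    (h11 : M.toBlocks₁₁ = -matC P₀)
    (h12 : M.toBlocks₁₂ * Lam F u n = (X : F[X]) ^ (u+1) • matC P₀)
    (h21 : (Lam F u n)ᵀ * M.toBlocks₂₁ = (X : F[X]) ^ (u+1) • matC P₀)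
    (h22 : (Lam F u n)ᵀ * M.toBlocks₂₂ * Lam F u n = R - (X : F[X]) ^ (2*(u+1)) • matC P₀)
    (μ : F) {z : ((Fin n ⊕ Fin (u+1) × Fin n) ⊕ Fin u × Fin n) → F} (hz0 : z ≠ 0)
    (hz : evalMat μ (modBK F u n σ M) *ᵥ z = 0) :
    (fun r => z (Sum.inl (Sum.inr (Fin.last u, r)))) ≠ 0 ∧
      evalMat μ R *ᵥ (fun r => z (Sum.inl (Sum.inr (Fin.last u, r)))) = 0 := by
  obtain ⟨a, b, v, rfl⟩ : ∃ a b v, z = Sum.elim (Sum.elim a b) v :=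
    ⟨_, _, _, by ext ((_ | _) | _) <;> rfl⟩
  set x : Fin n → F := fun r => b (Fin.last u, r)
  change x ≠ 0 ∧ evalMat μ R *ᵥ x = 0
  obtain ⟨htop, hmid, hbot⟩ := modBK_mulVec_eq_zero hσ M hz
  have hb : b = evalMat μ (Lam F u n) *ᵥ x := (evalMat_Lpen_kron_mulVec_eq_zero_iff μ).mp hbot
  have ha : a = μ ^ (u+1) • x := by
    rw [h11, hb, mulVec_mulVec, ← evalMat_mul, h12, evalMat_X_pow_smul_matC, evalMat_neg,
      evalMat_matC, neg_mulVec, neg_add_eq_zero, smul_mulVec, ← mulVec_smul] at htop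
    exact mulVec_injective_iff_isUnit.mpr ((isUnit_iff_isUnit_det _).mpr hP₀) htop
  have hR : evalMat μ R *ᵥ x = 0 := by
    have h := congrArg ((evalMat μ (Lam F u n))ᵀ *ᵥ ·) hmid
    simp only [mulVec_add, mulVec_zero, mulVec_mulVec] at h
    rwa [← transpose_mul, evalMat_Lpen_kron_mul_Lam, transpose_zero, zero_mulVec, add_zero,
      ← evalMat_transpose, ← evalMat_mul, h21, hb, mulVec_mulVec, ← evalMat_mul, ← evalMat_mul,
      h22, ha, evalMat_sub, evalMat_X_pow_smul_matC, evalMat_X_pow_smul_matC, smul_mulVec,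
      mulVec_smul, smul_smul, ← pow_add, ← two_mul, sub_mulVec, smul_mulVec, add_sub_cancel]
      at h
  refine ⟨fun hx => hz0 ?_, hR⟩
  have hb0 : b = 0 := by rw [hb, hx, mulVec_zero]
  have ha0 : a = 0 := by rw [ha, hx, smul_zero]
  have hv0 : v = 0 :=
    eq_zero_of_evalMat_Lpen_kron_transpose_mulVec_eq_zero μ (by simpa [ha0, hb0] using hmid)
  rw [ha0, hb0, hv0]
  ext ((_ | _) | _) <;> rfl

end ModifiedBlockKronecker

theorem stmt_19_general {F : Type} [Field F] (n u : ℕ)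
    (Pc : ℕ → Matrix (Fin n) (Fin n) F)
    (hP0 : IsUnit (Pc 0).det)
    (σ : F) (hσ : σ = 1 ∨ σ = -1)
    (A B : Matrix (Fin n ⊕ Fin (u+1) × Fin n) (Fin n ⊕ Fin (u+1) × Fin n) F)
    (h11 : (pencil A B).toBlocks₁₁ = -(matC (Pc 0)))
    (h12 : (pencil A B).toBlocks₁₂ * Lam F u n = (X : Polynomial F) ^ (u+1) • matC (Pc 0))
    (h21 : (Lam F u n)ᵀ * (pencil A B).toBlocks₂₁ =
      (X : Polynomial F) ^ (u+1) • matC (Pc 0))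
    (h22 : (Lam F u n)ᵀ * (pencil A B).toBlocks₂₂ * Lam F u n =
      revMat (2*(u+1)) (polyOfCoeffs (2*(u+1)) Pc) -
        (X : Polynomial F) ^ (2*(u+1)) • matC (Pc 0)) :
    (∀ lam0 : F, lam0 ≠ 0 →
      ∀ z : ((Fin n ⊕ Fin (u+1) × Fin n) ⊕ Fin u × Fin n) → F, z ≠ 0 →
        (evalMat lam0 (revMat 1 (modBK F u n σ (pencil A B)))).mulVec z = 0 →
          (fun r => z (Sum.inl (Sum.inr (Fin.last u, r)))) ≠ 0 ∧
            (evalMat lam0 (polyOfCoeffs (2*(u+1)) Pc)).mulVec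
              (fun r => z (Sum.inl (Sum.inr (Fin.last u, r)))) = 0) ∧
    (∀ z : ((Fin n ⊕ Fin (u+1) × Fin n) ⊕ Fin u × Fin n) → F, z ≠ 0 →
      (evalMat (0 : F) (revMat 1 (revMat 1 (modBK F u n σ (pencil A B))))).mulVec z = 0 →
        (fun r => z (Sum.inl (Sum.inr (Fin.last u, r)))) ≠ 0 ∧
          (Pc (2*(u+1))).mulVec (fun r => z (Sum.inl (Sum.inr (Fin.last u, r)))) = 0) := by
  have hσ0 : σ ≠ 0 := by rcases hσ with rfl | rfl <;> simp
  have kernel := mulVec_lastBlock_eq_zero_of_modBK_mulVec_eq_zero hσ0 hP0 h11 h12 h21 h22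
  refine ⟨fun lam0 hlam0 z hz0 hz => ?_, fun z hz0 hz => ?_⟩
  · rw [evalMat_revMat_of_natDegree_le
      (natDegree_modBK_apply_le u n σ (natDegree_pencil_apply_le A B)) hlam0, smul_mulVec,
      smul_eq_zero_iff_right (pow_ne_zero _ hlam0)] at hz
    obtain ⟨hx, hPx⟩ := kernel lam0⁻¹ hz0 hz
    rw [evalMat_revMat_polyOfCoeffs _ _ hlam0, smul_mulVec,
      smul_eq_zero_iff_right (pow_ne_zero _ (inv_ne_zero hlam0))] at hPx
    exact ⟨hx, hPx⟩
  · rw [revMat_revMat] at hz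
    obtain ⟨hx, hPx⟩ := kernel 0 hz0 hz
    rw [evalMat_zero_revMat_polyOfCoeffs] at hPx
    exact ⟨hx, hPx⟩

/-- (Recovery for even degree `d = 2t` with invertible trailing
coefficient, `t = u+1 ≥ 2`.) With `L̃(λ)` the modified block Kronecker pencil for `rev_d P`
and `L(λ) := rev_1 L̃(λ)`: (a) for `λ0 ≠ 0`, the `(t+1)`-th block of any `0 ≠ z` with
`L(λ0)z = 0` is a right eigenvector of `P` with eigenvalue `λ0`; (b) the `(t+1)`-th block
of any `0 ≠ z` with `(rev_1 L)(0)z = 0` is a right eigenvector of `P` for `∞`. -/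
theorem stmt_19 {F : Type} [Field F] (n u : ℕ) (hn : 0 < n) (hu : 1 ≤ u)
    (Pc : ℕ → Matrix (Fin n) (Fin n) F)
    (hdeg : Pc (2*(u+1)) ≠ 0)
    (hreg : (polyOfCoeffs (2*(u+1)) Pc).det ≠ 0)
    (hP0 : IsUnit (Pc 0).det)
    (σ : F) (hσ : σ = 1 ∨ σ = -1)
    (A B : Matrix (Fin n ⊕ Fin (u+1) × Fin n) (Fin n ⊕ Fin (u+1) × Fin n) F)
    (h11 : (pencil A B).toBlocks₁₁ = -(matC (Pc 0)))
    (h12 : (pencil A B).toBlocks₁₂ * Lam F u n = (X : Polynomial F) ^ (u+1) • matC (Pc 0))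
    (h21 : (Lam F u n)ᵀ * (pencil A B).toBlocks₂₁ =
      (X : Polynomial F) ^ (u+1) • matC (Pc 0))
    (h22 : (Lam F u n)ᵀ * (pencil A B).toBlocks₂₂ * Lam F u n =
      revMat (2*(u+1)) (polyOfCoeffs (2*(u+1)) Pc) -
        (X : Polynomial F) ^ (2*(u+1)) • matC (Pc 0)) :
    (∀ lam0 : F, lam0 ≠ 0 →
      ∀ z : ((Fin n ⊕ Fin (u+1) × Fin n) ⊕ Fin u × Fin n) → F, z ≠ 0 →
        (evalMat lam0 (revMat 1 (modBK F u n σ (pencil A B)))).mulVec z = 0 →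
          (fun r => z (Sum.inl (Sum.inr (Fin.last u, r)))) ≠ 0 ∧
            (evalMat lam0 (polyOfCoeffs (2*(u+1)) Pc)).mulVec
              (fun r => z (Sum.inl (Sum.inr (Fin.last u, r)))) = 0) ∧
    (∀ z : ((Fin n ⊕ Fin (u+1) × Fin n) ⊕ Fin u × Fin n) → F, z ≠ 0 →
      (evalMat (0 : F) (revMat 1 (revMat 1 (modBK F u n σ (pencil A B))))).mulVec z = 0 →
        (fun r => z (Sum.inl (Sum.inr (Fin.last u, r)))) ≠ 0 ∧
          (Pc (2*(u+1))).mulVec (fun r => z (Sum.inl (Sum.inr (Fin.last u, r)))) = 0) :=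
  stmt_19_general n u Pc hP0 σ hσ A B h11 h12 h21 h22
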